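/- arXiv:2305.03609 — 4 statements merged into one kernel-verified Lean document; each statement's English description precedes it below -/
import Mathlib

section
/- Let $\{u_D : \mathcal{Y} \to \mathbb{R}\}$ be utility functions indexed by databases with finite sensitivity $\Delta \ge \sup_{H(D,D')\le 1}\sup_y |u_D(y) - u_{D'}(y)|$, and suppose $\int \exp(u_D(y)) d\nu(y) < \infty$ for all $D$. Then the mechanism with output density $p_D(y) \propto \exp(\frac{\epsilon}{2\Delta} u_D(y))$ with respect to $\nu$ satisfies $\epsilon$-differential privacy: for all measurable $S$ and adjacent $D, D'$, $\mathbb{P}(M(D) \in S) \le e^\epsilon \mathbb{P}(M(D') \in S)$. -/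
open MeasureTheory
open scoped ENNReal Classical

noncomputable def hammingDistance {α : Type*} {n : ℕ} (D D' : Fin n → α) : ℕ :=
  (Finset.univ.filter fun i => D i ≠ D' i).card

/-!
If `ε/(2Δ) · u_D` and `ε/(2Δ) · u_{D'}` differ by at most `ε/2` pointwise, then so do the
logarithms of their partition functions, hence the normalized densities differ by a factor
of at most `e^{ε/2} · e^{ε/2} = e^ε`, and this ratio bound passes to the measures.
-/

open Real

section Gibbs

variable {Y : Type*} [MeasurableSpace Y] (ν : Measure Y)

-- Real division makes this `0` when the partition function `∫ exp ∘ f` vanishes.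
noncomputable def gibbsDensity (f : Y → ℝ) (y : Y) : ℝ≥0∞ :=
  ENNReal.ofReal (exp (f y) / ∫ z, exp (f z) ∂ν)

variable {ν}

theorem integral_exp_le_exp_mul_integral_exp {f g : Y → ℝ} {a : ℝ}
    (hg : Integrable (fun y => exp (g y)) ν) (hfg : ∀ y, f y ≤ g y + a) :
    ∫ y, exp (f y) ∂ν ≤ exp a * ∫ y, exp (g y) ∂ν := by
  rw [← integral_const_mul]
  refine integral_mono_of_nonneg (ae_of_all _ fun y => (exp_pos _).le) (hg.const_mul _)
    (ae_of_all _ fun y => ?_)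
  show exp (f y) ≤ exp a * exp (g y)
  rw [← exp_add]
  exact exp_le_exp.mpr (by linarith [hfg y])

theorem gibbsDensity_le_exp_mul {f g : Y → ℝ} {a : ℝ}
    (hf : Integrable (fun y => exp (f y)) ν) (hg : Integrable (fun y => exp (g y)) ν)
    (hfg : ∀ y, |f y - g y| ≤ a) (y : Y) :
    gibbsDensity ν f y ≤ ENNReal.ofReal (exp (2 * a)) * gibbsDensity ν g y := by
  have hle : ∀ y, f y ≤ g y + a := fun y => by linarith [(abs_le.mp (hfg y)).2]
  have hge : ∀ y, g y ≤ f y + a := fun y => by linarith [(abs_le.mp (hfg y)).1]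
  set Zf := ∫ z, exp (f z) ∂ν
  set Zg := ∫ z, exp (g z) ∂ν
  rcases (integral_nonneg fun z => (exp_pos (f z)).le : 0 ≤ Zf).eq_or_lt with hZf | hZf
  · simp [gibbsDensity, ← hZf]
  have hZg : 0 < Zg :=
    pos_of_mul_pos_right (hZf.trans_le (integral_exp_le_exp_mul_integral_exp hg hle))
      (exp_pos a).le
  have hZfg : exp (-a) * Zg ≤ Zf := by
    rw [← le_div_iff₀' (exp_pos _), div_eq_mul_inv, ← exp_neg, neg_neg, mul_comm]
    exact integral_exp_le_exp_mul_integral_exp hf hge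
  rw [gibbsDensity, gibbsDensity, ← ENNReal.ofReal_mul (exp_pos _).le]
  refine ENNReal.ofReal_le_ofReal ?_
  calc exp (f y) / Zf
      ≤ exp a * exp (g y) / (exp (-a) * Zg) := by
        refine div_le_div₀ (by positivity) ?_ (by positivity) hZfg
        rw [← exp_add]
        exact exp_le_exp.mpr (by linarith [hle y])
    _ = exp (2 * a) * (exp (g y) / Zg) := by
        rw [exp_neg, two_mul, exp_add]
        field_simp

end Gibbs

theorem withDensity_le_smul_withDensity {Y : Type*} [MeasurableSpace Y] {ν : Measure Y}
    {f g : Y → ℝ≥0∞} {C : ℝ≥0∞} (hC : C ≠ ∞) (hfg : ∀ y, f y ≤ C * g y) :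
    ν.withDensity f ≤ C • ν.withDensity g := by
  rw [← withDensity_smul' C g hC]
  exact withDensity_mono (ae_of_all _ hfg)

theorem exponential_mechanism_is_DP_general {X Y : Type*} [MeasurableSpace Y] {n : ℕ}
    (ν : Measure Y) (u : (Fin n → X) → Y → ℝ) (ε Δ : ℝ) (hε : 0 < ε) (hΔ : 0 < Δ)
    (hsens : ∀ D D' : Fin n → X, hammingDistance D D' ≤ 1 →
      ∀ y, |u D y - u D' y| ≤ Δ)
    (hint' : ∀ D, Integrable (fun y => Real.exp (ε / (2 * Δ) * u D y)) ν)
    (M : (Fin n → X) → Measure Y)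
    (hM : ∀ D, M D = ν.withDensity fun y =>
      ENNReal.ofReal (Real.exp (ε / (2 * Δ) * u D y) /
        ∫ z, Real.exp (ε / (2 * Δ) * u D z) ∂ν)) :
    ∀ S : Set Y, MeasurableSet S → ∀ D D' : Fin n → X, hammingDistance D D' ≤ 1 →
      M D S ≤ ENNReal.ofReal (Real.exp ε) * M D' S := by
  intro S _ D D' hadj
  have hclose : ∀ y, |ε / (2 * Δ) * u D y - ε / (2 * Δ) * u D' y| ≤ ε / 2 := fun y => by
    rw [← mul_sub, abs_mul, abs_of_pos (by positivity)]
    calc ε / (2 * Δ) * |u D y - u D' y| ≤ ε / (2 * Δ) * Δ :=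
          mul_le_mul_of_nonneg_left (hsens D D' hadj y) (by positivity)
      _ = ε / 2 := by field_simp
  have hdens := gibbsDensity_le_exp_mul (hint' D) (hint' D') hclose
  rw [mul_div_cancel₀ ε two_ne_zero] at hdens
  rw [hM D, hM D']
  exact withDensity_le_smul_withDensity ENNReal.ofReal_ne_top hdens S

/-- the exponential mechanism, with output density proportional to
`exp(ε u_D(y) / (2Δ))` with respect to `ν`, satisfies `ε`-differential privacy. -/
theorem exponential_mechanism_is_DP {X Y : Type*} [MeasurableSpace Y] {n : ℕ}
    (ν : Measure Y) (u : (Fin n → X) → Y → ℝ) (ε Δ : ℝ) (hε : 0 < ε) (hΔ : 0 < Δ)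
    (hsens : ∀ D D' : Fin n → X, hammingDistance D D' ≤ 1 →
      ∀ y, |u D y - u D' y| ≤ Δ)
    (hint : ∀ D, Integrable (fun y => Real.exp (u D y)) ν)
    (hint' : ∀ D, Integrable (fun y => Real.exp (ε / (2 * Δ) * u D y)) ν)
    (M : (Fin n → X) → Measure Y)
    (hM : ∀ D, M D = ν.withDensity fun y =>
      ENNReal.ofReal (Real.exp (ε / (2 * Δ) * u D y) /
        ∫ z, Real.exp (ε / (2 * Δ) * u D z) ∂ν)) :
    ∀ S : Set Y, MeasurableSet S → ∀ D D' : Fin n → X, hammingDistance D D' ≤ 1 →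
      M D S ≤ ENNReal.ofReal (Real.exp ε) * M D' S :=
  exponential_mechanism_is_DP_general ν u ε Δ hε hΔ hsens hint' M hM
end

section
/- Let $\mathcal{M}$ be an $\epsilon$-DP mechanism and let $X, X'$ be adjacent databases. Then for any test $\phi : \mathcal{Y} \to [0,1]$ of $H_0 : X$ versus $H_1 : X'$, the sum of the type I error $\mathbb{E}\phi(\mathcal{M}(X))$ and the type II error $1 - \mathbb{E}\phi(\mathcal{M}(X'))$ is at least $\frac{2}{1+e^\epsilon}$. -/
/-!
Both errors of a test `φ` are integrals of `[0,1]`-valued functions, and `ε`-DP in both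
directions bounds each integral under one database by `e^ε` times the integral under the other.
Applied to `φ` this gives `β ≤ e^ε α` for the integrals `α, β` of `φ` under `X, X'`, and applied
to `1 - φ` it gives `1 - α ≤ e^ε (1 - β)`. Adding the two inequalities yields
`(1 + e^ε)(α + 1 - β) ≥ 2`.
-/

open MeasureTheory
open scoped ENNReal Classical

lemma hammingDistance_comm {α : Type*} {n : ℕ} (D D' : Fin n → α) :
    hammingDistance D D' = hammingDistance D' D := by
  simp only [hammingDistance, ne_comm]

lemma integral_le_mul_integral_of_le_smul {Y : Type*} [MeasurableSpace Y] {μ ν : Measure Y}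
    {c : ℝ} (hc : 0 ≤ c) (hνμ : ν ≤ ENNReal.ofReal c • μ) {f : Y → ℝ} (hf : Integrable f μ)
    (hf0 : 0 ≤ f) :
    ∫ y, f y ∂ν ≤ c * ∫ y, f y ∂μ :=
  calc ∫ y, f y ∂ν ≤ ∫ y, f y ∂(ENNReal.ofReal c • μ) :=
        integral_mono_measure hνμ (ae_of_all _ hf0) (hf.smul_measure ENNReal.ofReal_ne_top)
    _ = c * ∫ y, f y ∂μ := by rw [integral_smul_measure, ENNReal.toReal_ofReal hc, smul_eq_mul]

lemma integrable_of_mem_Icc_zero_one {Y : Type*} [MeasurableSpace Y] {μ : Measure Y}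
    [IsFiniteMeasure μ] {φ : Y → ℝ} (hφ : Measurable φ) (hφ01 : ∀ y, φ y ∈ Set.Icc (0 : ℝ) 1) :
    Integrable φ μ :=
  Integrable.of_bound hφ.aestronglyMeasurable 1 <| ae_of_all _ fun y => by
    rw [Real.norm_eq_abs, abs_of_nonneg (hφ01 y).1]
    exact (hφ01 y).2

lemma two_div_one_add_le_integral_add_one_sub_integral {Y : Type*} [MeasurableSpace Y]
    {μ ν : Measure Y} [IsProbabilityMeasure μ] [IsProbabilityMeasure ν] {c : ℝ} (hc : 0 ≤ c)
    (hμν : μ ≤ ENNReal.ofReal c • ν) (hνμ : ν ≤ ENNReal.ofReal c • μ) {φ : Y → ℝ}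
    (hφ : Measurable φ) (hφ01 : ∀ y, φ y ∈ Set.Icc (0 : ℝ) 1) :
    2 / (1 + c) ≤ (∫ y, φ y ∂μ) + (1 - ∫ y, φ y ∂ν) := by
  have hφ01' : ∀ y, 1 - φ y ∈ Set.Icc (0 : ℝ) 1 := fun y => by
    obtain ⟨h0, h1⟩ := hφ01 y
    constructor <;> linarith
  have integral_one_sub : ∀ κ : Measure Y, [IsProbabilityMeasure κ] →
      ∫ y, (1 - φ y) ∂κ = 1 - ∫ y, φ y ∂κ := fun κ _ => by
    rw [integral_sub (integrable_const 1) (integrable_of_mem_Icc_zero_one hφ hφ01)]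
    simp
  have φ_bound : ∫ y, φ y ∂ν ≤ c * ∫ y, φ y ∂μ :=
    integral_le_mul_integral_of_le_smul hc hνμ (integrable_of_mem_Icc_zero_one hφ hφ01)
      fun y => (hφ01 y).1
  have one_sub_φ_bound : 1 - ∫ y, φ y ∂μ ≤ c * (1 - ∫ y, φ y ∂ν) := by
    rw [← integral_one_sub μ, ← integral_one_sub ν]
    exact integral_le_mul_integral_of_le_smul hc hμν
      (integrable_of_mem_Icc_zero_one (measurable_const.sub hφ) hφ01') fun y => (hφ01' y).1
  rw [div_le_iff₀ (by linarith)]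
  linarith

theorem dp_testing_lower_bound_general {α Y : Type*} [MeasurableSpace Y] {n : ℕ} (ε : ℝ)
    (M : (Fin n → α) → Measure Y)
    (hprob : ∀ D, IsProbabilityMeasure (M D))
    (hDP : ∀ D D' : Fin n → α, hammingDistance D D' ≤ 1 → ∀ S : Set Y,
      MeasurableSet S → M D S ≤ ENNReal.ofReal (Real.exp ε) * M D' S)
    (X X' : Fin n → α) (hadj : hammingDistance X X' ≤ 1)
    (φ : Y → ℝ) (hφ : Measurable φ) (hφ01 : ∀ y, φ y ∈ Set.Icc (0 : ℝ) 1) :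
    2 / (1 + Real.exp ε) ≤ (∫ y, φ y ∂(M X)) + (1 - ∫ y, φ y ∂(M X')) := by
  have := hprob X
  have := hprob X'
  have le_smul : ∀ D D', hammingDistance D D' ≤ 1 → M D ≤ ENNReal.ofReal (Real.exp ε) • M D' :=
    fun D D' h => Measure.le_iff.2 fun S hS => by simpa using hDP D D' h S hS
  exact two_div_one_add_le_integral_add_one_sub_integral (Real.exp_pos ε).le
    (le_smul X X' hadj) (le_smul X' X (hammingDistance_comm X X' ▸ hadj)) hφ hφ01

/-- for an `ε`-DP mechanism `M` and adjacent databases `X, X'`, any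
test `φ : 𝒴 → [0,1]` of `H₀ : X` versus `H₁ : X'` satisfies
type I error + type II error `≥ 2 / (1 + e^ε)`. -/
theorem dp_testing_lower_bound {α Y : Type*} [MeasurableSpace Y] {n : ℕ} (ε : ℝ)
    (hε : 0 ≤ ε) (M : (Fin n → α) → Measure Y)
    (hprob : ∀ D, IsProbabilityMeasure (M D))
    (hDP : ∀ D D' : Fin n → α, hammingDistance D D' ≤ 1 → ∀ S : Set Y,
      MeasurableSet S → M D S ≤ ENNReal.ofReal (Real.exp ε) * M D' S)
    (X X' : Fin n → α) (hadj : hammingDistance X X' ≤ 1)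
    (φ : Y → ℝ) (hφ : Measurable φ) (hφ01 : ∀ y, φ y ∈ Set.Icc (0 : ℝ) 1) :
    2 / (1 + Real.exp ε) ≤ (∫ y, φ y ∂(M X)) + (1 - ∫ y, φ y ∂(M X')) :=
  dp_testing_lower_bound_general ε M hprob hDP X X' hadj φ hφ hφ01
end

section
/- Let $\mathcal{M}$ be an $\epsilon$-DP mechanism producing outputs in a metric space $(\mathcal{Y}, \rho)$, and suppose $X, Y$ are databases with Hamming distance $K$ satisfying $K\epsilon \le 1$ and $\rho(T(X), T(Y)) \ge K\Delta$ for some target statistic $T$. Then it is not possible that both $\mathbb{P}(\rho(\mathcal{M}(X), T(X)) \ge K\Delta/2) < \frac{1}{1+e}$ and $\mathbb{P}(\rho(\mathcal{M}(Y), T(Y)) \ge K\Delta/2) < \frac{1}{1+e}$. -/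
open MeasureTheory
open scoped ENNReal Classical

/-!
Walking from `X` to `Y` one coordinate at a time turns `ε`-DP into `Kε`-DP (group privacy).
The open balls of radius `KΔ/2` around `T X` and `T Y` are disjoint, so the event "far from
`T Y`" contains the event "close to `T X`"; transporting its probability from `X` to `Y` gives
`type I + e^{Kε} · type II ≥ 1`, and since `e^{Kε} ≤ e` both errors cannot be below `1/(1+e)`.
-/

open Metric

section Hamming

variable {ι α : Type*} [Fintype ι] [DecidableEq α]

theorem hammingDistance_eq_hammingDist {n : ℕ} (D D' : Fin n → α) :
    hammingDistance D D' = hammingDist D D' := by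
  unfold hammingDistance hammingDist
  congr

theorem hammingDist_update_self_le_one [DecidableEq ι] (x : ι → α) (i : ι) (a : α) :
    hammingDist x (Function.update x i a) ≤ 1 := by
  refine Finset.card_le_one.2 fun j hj k hk => ?_
  have mem_eq : ∀ l ∈ ({l | x l ≠ Function.update x i a l} : Finset ι), l = i := by
    intro l hl
    by_contra hli
    simp [Function.update_of_ne hli] at hl
  rw [mem_eq j hj, mem_eq k hk]

theorem hammingDist_update_of_ne [DecidableEq ι] {x y : ι → α} {i : ι} (h : x i ≠ y i) :
    hammingDist (Function.update x i (y i)) y = hammingDist x y - 1 := by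
  have hfilter : ({j | Function.update x i (y i) j ≠ y j} : Finset ι) =
      ({j | x j ≠ y j} : Finset ι).erase i := by
    ext j
    by_cases hji : j = i <;> simp [hji]
  rw [hammingDist, hfilter, Finset.card_erase_of_mem (by simpa using h), hammingDist]

theorem exists_hammingDist_le_one_and_eq_of_eq_succ {x y : ι → α} {k : ℕ}
    (h : hammingDist x y = k + 1) : ∃ z, hammingDist x z ≤ 1 ∧ hammingDist z y = k := by
  obtain ⟨i, hi⟩ : ∃ i, x i ≠ y i :=
    Function.ne_iff.1 (hammingDist_ne_zero.1 (by omega))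
  exact ⟨Function.update x i (y i), hammingDist_update_self_le_one x i (y i), by
    rw [hammingDist_update_of_ne hi, h, Nat.add_sub_cancel]⟩

end Hamming

theorem measure_le_exp_mul_of_hammingDist_eq {ι α Ω : Type*} [Fintype ι] [DecidableEq α]
    [MeasurableSpace Ω] {ε : ℝ} {M : (ι → α) → Measure Ω}
    (hDP : ∀ D D' : ι → α, hammingDist D D' ≤ 1 → ∀ S : Set Ω,
      MeasurableSet S → M D S ≤ ENNReal.ofReal (Real.exp ε) * M D' S)
    {k : ℕ} {X Y : ι → α} (hXY : hammingDist X Y = k) {S : Set Ω} (hS : MeasurableSet S) :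
    M X S ≤ ENNReal.ofReal (Real.exp (k * ε)) * M Y S := by
  induction k generalizing X with
  | zero => simp [hammingDist_eq_zero.1 hXY]
  | succ k ih =>
    obtain ⟨Z, hXZ, hZY⟩ := exists_hammingDist_le_one_and_eq_of_eq_succ hXY
    calc M X S ≤ ENNReal.ofReal (Real.exp ε) * M Z S := hDP X Z hXZ S hS
      _ ≤ ENNReal.ofReal (Real.exp ε) * (ENNReal.ofReal (Real.exp (k * ε)) * M Y S) := by
        gcongr
        exact ih hZY
      _ = ENNReal.ofReal (Real.exp ((k + 1 : ℕ) * ε)) * M Y S := by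
        rw [← mul_assoc, ← ENNReal.ofReal_mul (Real.exp_nonneg _), ← Real.exp_add]
        push_cast
        ring_nf

theorem one_le_measure_add_mul_of_compl_subset {Ω : Type*} [MeasurableSpace Ω]
    {μ ν : Measure Ω} [IsProbabilityMeasure μ] {A B : Set Ω} {c : ℝ≥0∞}
    (hAB : Bᶜ ⊆ A) (h : μ B ≤ c * ν B) : 1 ≤ μ A + c * ν B :=
  calc 1 = μ Set.univ := measure_univ.symm
    _ ≤ μ B + μ Bᶜ := measure_univ_le_add_compl B
    _ ≤ c * ν B + μ A := add_le_add h (measure_mono hAB)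
    _ = μ A + c * ν B := add_comm _ _

theorem ENNReal.add_mul_lt_one {p q c : ℝ≥0∞} {t : ℝ} (ht : 0 ≤ t)
    (hp : p < ENNReal.ofReal (1 / (1 + t))) (hq : q ≤ ENNReal.ofReal (1 / (1 + t)))
    (hc : c ≤ ENNReal.ofReal t) : p + c * q < 1 := by
  have hcq := mul_le_mul' hc hq
  calc p + c * q
      < ENNReal.ofReal (1 / (1 + t)) + ENNReal.ofReal t * ENNReal.ofReal (1 / (1 + t)) :=
        ENNReal.add_lt_add_of_lt_of_le (ne_top_of_le_ne_top (by finiteness) hcq) hp hcq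
    _ = 1 := by
        rw [← ENNReal.ofReal_mul ht, ← ENNReal.ofReal_add (by positivity) (by positivity)]
        rw [show 1 / (1 + t) + t * (1 / (1 + t)) = 1 by field_simp]
        simp

theorem dp_estimation_lower_bound_general {α Ω : Type*} [MeasurableSpace Ω]
    [PseudoMetricSpace Ω] [OpensMeasurableSpace Ω] {n : ℕ} (ε Δ : ℝ)
    (M : (Fin n → α) → Measure Ω)
    (hprob : ∀ D, IsProbabilityMeasure (M D))
    (hDP : ∀ D D' : Fin n → α, hammingDistance D D' ≤ 1 → ∀ S : Set Ω,
      MeasurableSet S → M D S ≤ ENNReal.ofReal (Real.exp ε) * M D' S)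
    (T : (Fin n → α) → Ω) (K : ℕ) (X Y : Fin n → α)
    (hK : hammingDistance X Y = K) (hKε : (K : ℝ) * ε ≤ 1)
    (hsep : (K : ℝ) * Δ ≤ dist (T X) (T Y)) :
    ¬ ((M X {z | (K : ℝ) * Δ / 2 ≤ dist z (T X)} <
          ENNReal.ofReal (1 / (1 + Real.exp 1))) ∧
       (M Y {z | (K : ℝ) * Δ / 2 ≤ dist z (T Y)} <
          ENNReal.ofReal (1 / (1 + Real.exp 1)))) := by
  rintro ⟨hX, hY⟩
  set r := (K : ℝ) * Δ / 2 with hr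
  have far_eq : ∀ a : Ω, {z | r ≤ dist z a} = (ball a r)ᶜ := fun a => by ext; simp
  rw [far_eq] at hX hY
  simp only [hammingDistance_eq_hammingDist] at hDP hK
  have group : M X (ball (T Y) r)ᶜ ≤ ENNReal.ofReal (Real.exp (K * ε)) * M Y (ball (T Y) r)ᶜ :=
    measure_le_exp_mul_of_hammingDist_eq hDP hK isOpen_ball.isClosed_compl.measurableSet
  have balls_disjoint : Disjoint (ball (T X) r) (ball (T Y) r) :=
    ball_disjoint_ball (by linarith)
  have errors_sum := one_le_measure_add_mul_of_compl_subset (μ := M X)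
    (by simpa using balls_disjoint.subset_compl_left) group
  have hc : ENNReal.ofReal (Real.exp (K * ε)) ≤ ENNReal.ofReal (Real.exp 1) := by gcongr
  exact (ENNReal.add_mul_lt_one (Real.exp_nonneg 1) hX hY.le hc).not_ge errors_sum

/-- lower bound for private estimation. If `M` is `ε`-DP, the
databases `X, Y` are at Hamming distance `K` with `Kε ≤ 1`, and the targets
satisfy `ρ(T(X), T(Y)) ≥ KΔ`, then the mechanism cannot be within `KΔ/2` of both
targets with probability greater than `1 - 1/(1+e)` in each case. -/
theorem dp_estimation_lower_bound {α Ω : Type*} [MeasurableSpace Ω]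
    [PseudoMetricSpace Ω] [OpensMeasurableSpace Ω] {n : ℕ} (ε Δ : ℝ) (hε : 0 < ε)
    (hΔ : 0 < Δ) (M : (Fin n → α) → Measure Ω)
    (hprob : ∀ D, IsProbabilityMeasure (M D))
    (hDP : ∀ D D' : Fin n → α, hammingDistance D D' ≤ 1 → ∀ S : Set Ω,
      MeasurableSet S → M D S ≤ ENNReal.ofReal (Real.exp ε) * M D' S)
    (T : (Fin n → α) → Ω) (K : ℕ) (X Y : Fin n → α)
    (hK : hammingDistance X Y = K) (hKε : (K : ℝ) * ε ≤ 1)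
    (hsep : (K : ℝ) * Δ ≤ dist (T X) (T Y)) :
    ¬ ((M X {z | (K : ℝ) * Δ / 2 ≤ dist z (T X)} <
          ENNReal.ofReal (1 / (1 + Real.exp 1))) ∧
       (M Y {z | (K : ℝ) * Δ / 2 ≤ dist z (T Y)} <
          ENNReal.ofReal (1 / (1 + Real.exp 1)))) :=
  dp_estimation_lower_bound_general ε Δ M hprob hDP T K X Y hK hKε hsep
end

section
/- Fix points $a, b \in \mathbb{R}^d$ with $\|a-b\| = L$ and midpoint $c$, integers $n$ even and $1 \le K \le k/2$ where $k = \lceil mn\rceil \le n/2 - K$. Let $Y_n$ be the multiset with $n/2 - K$ copies of $a$, $K$ copies of $c$, and $n/2$ copies of $b$. Parametrize the segment from $a$ to $c$ by $x(t) = (1-t)a + tc$, $t \in [0,1]$ (so $x(1) = c$). Then the empirical $L^1$-DTM of $Y_n$ at resolution $m$ satisfies $\hat\delta(x(t)) = t\frac{L}{2}$ for $0 \le t \le 1/2$ and $\hat\delta(x(t)) = \frac{(k-K)tL/2 + K(1-t)L/2}{k}$ for $1/2 < t \le 1$, and in particular $\hat\delta(x(t))$ is nondecreasing in $t$ on $[0,1]$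 when $K \le k/2$, with $\hat\delta(c) = \frac{k-K}{k}\cdot\frac{L}{2}$. -/
/-! All data points and the query point `x t` lie on the line `s ↦ lineMap a c s`, at the
parameters `0` (for `a`), `1` (for `c`), `2` (for `b`) and `t`, so every distance is
`|s - t| · L/2`. All sets of `k` nearest neighbours have the same distance sum, so it suffices to
exhibit one: the `k` copies of `a` after the first `K` indices when `t ≤ 1/2`, and the `K` copies
of `c` with `k - K` copies of `a` when `t > 1/2`; in both cases the threshold `t · L/2` separates
them from the remaining points. The resulting profile is
`min (t · L/2) (((k - 2K) t + K) · L/(2k))`, a minimum of two nondecreasing affine functions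
when `2K ≤ k`. -/

/-- `v` is the value of the empirical `L^1`-DTM (with `k` nearest neighbours) of
the data `X` at the point `x`: every set of `k` nearest neighbours of `x` gives
the average distance `v`. -/
def DtmVal {α : Type*} [PseudoMetricSpace α] {n : ℕ} (X : Fin n → α) (k : ℕ)
    (x : α) (v : ℝ) : Prop :=
  ∀ s : Finset (Fin n), s.card = k →
    (∀ i ∈ s, ∀ j ∉ s, dist (X i) x ≤ dist (X j) x) →
    (1 / (k : ℝ)) * ∑ i ∈ s, dist (X i) x = v

open Finset AffineMap

section SmallestValues

variable {ι : Type*} {f : ι → ℝ}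

theorem card_mul_sum_le_card_mul_sum {A B : Finset ι} (h : ∀ i ∈ A, ∀ j ∈ B, f i ≤ f j) :
    (#B : ℝ) * ∑ i ∈ A, f i ≤ #A * ∑ j ∈ B, f j :=
  calc (#B : ℝ) * ∑ i ∈ A, f i = ∑ i ∈ A, ∑ _j ∈ B, f i := by
        simp only [sum_const, nsmul_eq_mul, mul_sum]
    _ ≤ ∑ i ∈ A, ∑ j ∈ B, f j := sum_le_sum fun i hi => sum_le_sum fun j hj => h i hi j hj
    _ = #A * ∑ j ∈ B, f j := by rw [sum_const, nsmul_eq_mul]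

theorem sum_le_sum_of_card_eq_of_forall_le {A B : Finset ι} (hcard : #A = #B)
    (h : ∀ i ∈ A, ∀ j ∈ B, f i ≤ f j) : ∑ i ∈ A, f i ≤ ∑ j ∈ B, f j := by
  rcases A.eq_empty_or_nonempty with rfl | hA
  · rw [card_empty, eq_comm, card_eq_zero] at hcard
    simp [hcard]
  · have hpos : (0 : ℝ) < #A := by exact_mod_cast hA.card_pos
    have := card_mul_sum_le_card_mul_sum h
    rw [← hcard] at this
    exact le_of_mul_le_mul_left this hpos

theorem sum_le_sum_of_card_eq_of_forall_mem_le_notMem {s t : Finset ι} (hcard : #s = #t)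
    (hs : ∀ i ∈ s, ∀ j ∉ s, f i ≤ f j) : ∑ i ∈ s, f i ≤ ∑ i ∈ t, f i := by
  classical
  have hsdiff : #(s \ t) = #(t \ s) := by
    have := card_sdiff_add_card_inter s t
    have := card_sdiff_add_card_inter t s
    rw [inter_comm] at this
    omega
  rw [← sum_inter_add_sum_sdiff s t, ← sum_inter_add_sum_sdiff t s, inter_comm]
  gcongr 1
  exact sum_le_sum_of_card_eq_of_forall_le hsdiff fun i hi j hj =>
    hs i (mem_sdiff.1 hi).1 j (mem_sdiff.1 hj).2

theorem sum_eq_sum_of_card_eq_of_forall_mem_le_notMem {s t : Finset ι} (hcard : #s = #t)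
    (hs : ∀ i ∈ s, ∀ j ∉ s, f i ≤ f j) (ht : ∀ i ∈ t, ∀ j ∉ t, f i ≤ f j) :
    ∑ i ∈ s, f i = ∑ i ∈ t, f i :=
  le_antisymm (sum_le_sum_of_card_eq_of_forall_mem_le_notMem hcard hs)
    (sum_le_sum_of_card_eq_of_forall_mem_le_notMem hcard.symm ht)

end SmallestValues

section DTM

variable {α : Type*} [PseudoMetricSpace α] {n : ℕ} {X : Fin n → α} {x : α}

theorem dtmVal_of_forall_mem_le_notMem {s : Finset (Fin n)}
    (hs : ∀ i ∈ s, ∀ j ∉ s, dist (X i) x ≤ dist (X j) x) :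
    DtmVal X #s x (1 / #s * ∑ i ∈ s, dist (X i) x) := by
  intro t hcard ht
  rw [sum_eq_sum_of_card_eq_of_forall_mem_le_notMem hcard ht hs]

theorem dtmVal_of_forall_le_of_forall_ge {g : ℕ → ℝ} (hg : ∀ i : Fin n, dist (X i) x = g i)
    {I : Finset ℕ} (hI : ∀ i ∈ I, i < n) {θ : ℝ} (hle : ∀ i ∈ I, g i ≤ θ)
    (hge : ∀ i < n, i ∉ I → θ ≤ g i) :
    DtmVal X #I x (1 / #I * ∑ i ∈ I, g i) := by
  have hsum : ∑ i ∈ I.attachFin hI, dist (X i) x = ∑ i ∈ I, g i := by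
    simp_rw [hg]
    exact (sum_map (I.attachFin hI) Fin.valEmbedding g).symm.trans
      (by rw [map_valEmbedding_attachFin])
  rw [← hsum, ← card_attachFin I hI]
  refine dtmVal_of_forall_mem_le_notMem fun i hi j hj => ?_
  rw [hg, hg]
  rw [mem_attachFin] at hi hj
  exact (hle i hi).trans (hge j j.isLt hj)

end DTM

theorem lineMap_midpoint_two {R V P : Type*} [Ring R] [Invertible (2 : R)] [AddCommGroup V]
    [Module R V] [AddTorsor V P] (a b : P) : lineMap a (midpoint R a b) (2 : R) = b := by
  rw [midpoint, lineMap_lineMap_right, mul_invOf_self, lineMap_apply_one]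

/-- `K` copies of `c`, then copies of `a` up to index `h`, then copies of `b`, as parameters on
the line `s ↦ lineMap a c s`. -/
def dataParam (K h i : ℕ) : ℝ := if i < K then 1 else if i < h then 0 else 2

section dataParam

variable {K h k i : ℕ} {t : ℝ}

theorem dataParam_of_le_of_lt (hK : K ≤ i) (hh : i < h) : dataParam K h i = 0 := by
  rw [dataParam, if_neg (not_lt.2 hK), if_pos hh]

theorem le_abs_dataParam_sub (ht : t ≤ 1 / 2) : t ≤ |dataParam K h i - t| := by
  unfold dataParam
  split_ifs
  all_goals first
    | exact le_abs.2 (Or.inl (by linarith))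
    | exact le_abs.2 (Or.inr (by linarith))

theorem le_abs_dataParam_sub_of_le (ht : t ≤ 1) (hi : K ≤ i) : t ≤ |dataParam K h i - t| := by
  unfold dataParam
  split_ifs
  all_goals first
    | omega
    | exact le_abs.2 (Or.inl (by linarith))
    | exact le_abs.2 (Or.inr (by linarith))

theorem abs_dataParam_sub_le_of_lt (ht : 1 / 2 ≤ t) (hi : i < h) : |dataParam K h i - t| ≤ t := by
  unfold dataParam
  split_ifs
  all_goals first
    | omega
    | exact abs_le.2 ⟨by linarith, by linarith⟩

theorem sum_Ico_abs_dataParam_sub (hkh : K + k ≤ h) :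
    ∑ i ∈ Ico K (K + k), |dataParam K h i - t| = k * |t| := by
  have ha : ∀ i ∈ Ico K (K + k), |dataParam K h i - t| = |t| := fun i hi => by
    rw [dataParam_of_le_of_lt (mem_Ico.1 hi).1 (by have := (mem_Ico.1 hi).2; omega), zero_sub,
      abs_neg]
  simp [sum_congr rfl ha]

theorem sum_range_abs_dataParam_sub (hKk : K ≤ k) (hkh : k ≤ h) :
    ∑ i ∈ range k, |dataParam K h i - t| = K * |1 - t| + (k - K) * |t| := by
  rw [← sum_range_add_sum_Ico _ hKk]
  have hc : ∀ i ∈ range K, |dataParam K h i - t| = |1 - t| := fun i hi => by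
    rw [dataParam, if_pos (mem_range.1 hi)]
  have ha : ∀ i ∈ Ico K k, |dataParam K h i - t| = |t| := fun i hi => by
    rw [dataParam_of_le_of_lt (mem_Ico.1 hi).1 ((mem_Ico.1 hi).2.trans_le hkh), zero_sub, abs_neg]
  rw [sum_congr rfl hc, sum_congr rfl ha]
  simp [Nat.cast_sub hKk]

end dataParam

theorem dtmVal_of_dist_eq_abs_dataParam_sub {α : Type*} [PseudoMetricSpace α] {n h K k : ℕ}
    {X : Fin n → α} {y : α} {r t : ℝ} (hr : 0 ≤ r) (ht : t ∈ Set.Icc (0 : ℝ) 1)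
    (hdist : ∀ i : Fin n, dist (X i) y = |dataParam K h i - t| * r)
    (hKk : K ≤ k) (hk : 0 < k) (hkh : K + k ≤ h) (hhn : h ≤ n) :
    DtmVal X k y (if t ≤ 1 / 2 then t * r else ((k - K) * t * r + K * (1 - t) * r) / k) := by
  obtain ⟨ht0, ht1⟩ := ht
  have hkR : (k : ℝ) ≠ 0 := by positivity
  split_ifs with hth
  · have hI : ∀ i ∈ Ico K (K + k), i < n := fun i hi => by have := (mem_Ico.1 hi).2; omega
    have hDTM := dtmVal_of_forall_le_of_forall_ge (g := fun i => |dataParam K h i - t| * r)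
      hdist hI (θ := t * r) (fun i hi => by
        rw [dataParam_of_le_of_lt (mem_Ico.1 hi).1 (by have := (mem_Ico.1 hi).2; omega),
          zero_sub, abs_neg, abs_of_nonneg ht0])
      (fun i _ _ => mul_le_mul_of_nonneg_right (le_abs_dataParam_sub hth) hr)
    rwa [Nat.card_Ico, Nat.add_sub_cancel_left, ← sum_mul, sum_Ico_abs_dataParam_sub hkh,
      abs_of_nonneg ht0, show 1 / (k : ℝ) * (k * t * r) = t * r by field_simp] at hDTM
  · have hI : ∀ i ∈ range k, i < n := fun i hi => by have := mem_range.1 hi; omega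
    have hDTM := dtmVal_of_forall_le_of_forall_ge (g := fun i => |dataParam K h i - t| * r)
      hdist hI (θ := t * r) (fun i hi => mul_le_mul_of_nonneg_right
        (abs_dataParam_sub_le_of_lt (by linarith) (by have := mem_range.1 hi; omega)) hr)
      (fun i _ hi => mul_le_mul_of_nonneg_right
        (le_abs_dataParam_sub_of_le ht1 (by rw [mem_range] at hi; omega)) hr)
    rw [card_range, ← sum_mul, sum_range_abs_dataParam_sub hKk (by omega), abs_of_nonneg ht0,
      abs_of_nonneg (by linarith : 0 ≤ 1 - t)] at hDTM
    convert hDTM using 1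
    field_simp
    ring

theorem monotone_dtm_profile {r k K : ℝ} (hr : 0 ≤ r) (hK : 0 ≤ K) (hk : 0 < k)
    (hKk : 2 * K ≤ k) :
    Monotone fun t : ℝ => if t ≤ 1 / 2 then t * r else ((k - K) * t * r + K * (1 - t) * r) / k := by
  have hmin : (fun t : ℝ => if t ≤ 1 / 2 then t * r else ((k - K) * t * r + K * (1 - t) * r) / k) =
      fun t => min (t * r) (((k - 2 * K) * t + K) * r / k) := by
    funext t
    split_ifs with ht
    · rw [min_eq_left]
      rw [le_div_iff₀ hk]
      nlinarith [mul_nonneg (mul_nonneg hK (by linarith : (0 : ℝ) ≤ 1 - 2 * t)) hr]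
    · rw [min_eq_right]
      · ring
      · rw [div_le_iff₀ hk]
        nlinarith [mul_nonneg (mul_nonneg hK (by linarith : (0 : ℝ) ≤ 2 * t - 1)) hr]
  rw [hmin]
  exact Monotone.min (fun s t hst => by gcongr) (fun s t hst => by gcongr)

theorem dtm_along_segment_general {d h : ℕ} (n : ℕ) (hn : n = 2 * h)
    (a b : EuclideanSpace ℝ (Fin d)) (L : ℝ) (hL : dist a b = L)
    (c : EuclideanSpace ℝ (Fin d)) (hc : c = midpoint ℝ a b)
    (k K : ℕ)
    (hK1 : 1 ≤ K) (hK2 : 2 * K ≤ k) (hkK : k ≤ h - K)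
    (Y : Fin n → EuclideanSpace ℝ (Fin d))
    (hY : ∀ i : Fin n, Y i =
      if (i : ℕ) < K then c else if (i : ℕ) < h then a else b)
    (x : ℝ → EuclideanSpace ℝ (Fin d))
    (hx : ∀ t : ℝ, x t = (1 - t) • a + t • c)
    (val : ℝ → ℝ)
    (hval : ∀ t : ℝ, val t = if t ≤ 1 / 2 then t * (L / 2)
      else (((k : ℝ) - K) * t * (L / 2) + (K : ℝ) * (1 - t) * (L / 2)) / k) :
    (∀ t ∈ Set.Icc (0 : ℝ) 1, DtmVal Y k (x t) (val t)) ∧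
    MonotoneOn val (Set.Icc (0 : ℝ) 1) ∧
    val 1 = ((k : ℝ) - K) / k * (L / 2) := by
  have hL0 : 0 ≤ L / 2 := by rw [← hL]; positivity
  have hac : dist a c = L / 2 := by
    rw [hc, dist_left_midpoint, hL]
    norm_num
    ring
  have hY' : ∀ i : Fin n, Y i = lineMap a c (dataParam K h i) := fun i => by
    rw [hY, dataParam]
    split_ifs
    · rw [lineMap_apply_one]
    · rw [lineMap_apply_zero]
    · rw [hc, lineMap_midpoint_two]
  have hdist : ∀ t (i : Fin n), dist (Y i) (x t) = |dataParam K h i - t| * (L / 2) :=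
    fun t i => by rw [hY', hx, ← lineMap_apply_module, dist_lineMap_lineMap, Real.dist_eq, hac]
  refine ⟨fun t ht => ?_, ?_, ?_⟩
  · rw [hval]
    exact dtmVal_of_dist_eq_abs_dataParam_sub hL0 ht (hdist t) (by omega) (by omega) (by omega)
      (by omega)
  · rw [show val = _ from funext hval]
    exact (monotone_dtm_profile hL0 (by positivity) (by exact_mod_cast (by omega : 0 < k))
      (by exact_mod_cast hK2)).monotoneOn _
  · rw [hval, if_neg (by norm_num)]
    ring

/-- along the segment `x(t) = (1-t)a + tc` from `a` to the midpoint
`c`, the empirical `L^1`-DTM of the multiset with `n/2 - K` copies of `a`, `K`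
copies of `c`, and `n/2` copies of `b` equals `t·L/2` for `t ≤ 1/2` and
`((k-K)t·L/2 + K(1-t)·L/2)/k` for `1/2 < t ≤ 1`; in particular this value
function is nondecreasing on `[0,1]` when `K ≤ k/2`, with value
`((k-K)/k)·(L/2)` at `c`. -/
theorem dtm_along_segment {d h : ℕ} (n : ℕ) (hn : n = 2 * h)
    (a b : EuclideanSpace ℝ (Fin d)) (L : ℝ) (hL : dist a b = L)
    (c : EuclideanSpace ℝ (Fin d)) (hc : c = midpoint ℝ a b)
    (m : ℝ) (hm : 0 < m) (k K : ℕ) (hk : k = ⌈m * n⌉₊)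
    (hK1 : 1 ≤ K) (hK2 : 2 * K ≤ k) (hkK : k ≤ h - K) (hKh : K ≤ h)
    (Y : Fin n → EuclideanSpace ℝ (Fin d))
    (hY : ∀ i : Fin n, Y i =
      if (i : ℕ) < K then c else if (i : ℕ) < h then a else b)
    (x : ℝ → EuclideanSpace ℝ (Fin d))
    (hx : ∀ t : ℝ, x t = (1 - t) • a + t • c)
    (val : ℝ → ℝ)
    (hval : ∀ t : ℝ, val t = if t ≤ 1 / 2 then t * (L / 2)
      else (((k : ℝ) - K) * t * (L / 2) + (K : ℝ) * (1 - t) * (L / 2)) / k) :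
    (∀ t ∈ Set.Icc (0 : ℝ) 1, DtmVal Y k (x t) (val t)) ∧
    MonotoneOn val (Set.Icc (0 : ℝ) 1) ∧
    val 1 = ((k : ℝ) - K) / k * (L / 2) :=
  dtm_along_segment_general n hn a b L hL c hc k K hK1 hK2 hkK Y hY x hx val hval
end
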